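/- Let G and G' be achievement positional games on disjoint vertex sets. If o(G)=o(G')=L^-, then o(G∪G')∈{L, L^-}; i.e. Left has a winning strategy on G∪G' as first player and a non-losing strategy on G∪G' as second player. -/

import Mathlib

namespace APG

/-- The two players: Left and Right. -/
inductive Player : Type
  | L : Player
  | R : Player
deriving DecidableEq, Repr

/-- The opponent of a player. -/
def Player.other : Player → Player
  | .L => .R
  | .R => .L

/-- An achievement positional game: a finite vertex set together with the set of
blue edges (Left's winning sets) and the set of red edges (Right's winning sets). -/
structure Game : Type where
  V : Finset ℕ
  EL : Finset (Finset ℕ)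
  ER : Finset (Finset ℕ)

/-- The edges are nonempty subsets of the vertex set. -/
def WellFormed (G : Game) : Prop :=
  (∀ e ∈ G.EL, e ⊆ G.V ∧ e.Nonempty) ∧ (∀ e ∈ G.ER, e ⊆ G.V ∧ e.Nonempty)

/-- The winning sets of a given player. -/
def Game.edges (G : Game) : Player → Finset (Finset ℕ)
  | .L => G.EL
  | .R => G.ER

/-- The player who makes the `i`-th move (0-indexed) when `s` moves first. -/
def mover (s : Player) (i : ℕ) : Player := if i % 2 = 0 then s else s.other

/-- The set of vertices picked by player `p` along the history `h`
(the chronological list of the moves played so far), when `s` moved first. -/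
def picked (s p : Player) (h : List ℕ) : Finset ℕ :=
  ((Finset.range h.length).filter fun i => mover s i = p).image fun i => h.getD i 0

/-- The set `S` of picked vertices fills some edge of `E`. -/
def fills (E : Finset (Finset ℕ)) (S : Finset ℕ) : Prop := ∃ e ∈ E, e ⊆ S

/-- The game is over: some player has picked all the vertices of one of their edges. -/
def ended (G : Game) (s : Player) (h : List ℕ) : Prop :=
  fills G.EL (picked s .L h) ∨ fills G.ER (picked s .R h)

/-- `h` is a legal history: no vertex is picked twice, every picked vertex belongs to
the board, and no move is made after the game has ended. -/
def ValidHist (G : Game) (s : Player) (h : List ℕ) : Prop :=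
  h.Nodup ∧ (∀ x ∈ h, x ∈ G.V) ∧ ∀ k, k < h.length → ¬ ended G s (h.take k)

/-- A strategy: a map assigning to each position (history) a vertex to pick. -/
abbrev Strategy := List ℕ → ℕ

/-- Along `h`, every move of player `p` agrees with the strategy `σ`. -/
def Follows (s p : Player) (σ : Strategy) (h : List ℕ) : Prop :=
  ∀ k, k < h.length → mover s k = p → h.getD k 0 = σ (h.take k)

/-- A finished play: either the game has ended or all vertices have been picked. -/
def Complete (G : Game) (s : Player) (h : List ℕ) : Prop :=
  ended G s h ∨ h.length = G.V.card

/-- The strategy `σ` of player `p` always suggests a legal move (an unpicked vertex)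
whenever the game is not over and it is `p`'s turn. -/
def Legal (G : Game) (s p : Player) (σ : Strategy) : Prop :=
  ∀ h, ValidHist G s h → Follows s p σ h → ¬ ended G s h → h.length < G.V.card →
    mover s h.length = p → σ h ∈ G.V ∧ σ h ∉ h

/-- Player `p` has a winning strategy on `G` when `s` moves first: following it,
every finished play ends with `p` having filled one of their edges (and, the game
having ended right there, the opponent has not filled an edge first). -/
def WinsAs (G : Game) (s p : Player) : Prop :=
  ∃ σ : Strategy, Legal G s p σ ∧
    ∀ h, ValidHist G s h → Follows s p σ h → Complete G s h →
      fills (G.edges p) (picked s p h)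

/-- Player `p` has a non-losing strategy on `G` when `s` moves first: following it,
the opponent never fills one of their edges. -/
def NonLosingAs (G : Game) (s p : Player) : Prop :=
  ∃ σ : Strategy, Legal G s p σ ∧
    ∀ h, ValidHist G s h → Follows s p σ h → Complete G s h →
      ¬ fills (G.edges p.other) (picked s p.other h)

/-- The possible results of the game, for a fixed starting player. -/
inductive Result : Type
  | Lwin : Result
  | draw : Result
  | Rwin : Result
deriving DecidableEq, Repr

/-- The result of `G` with optimal play, when `s` moves first, is `r`:
a win for a player means that player has a winning strategy, a draw means
both players have non-losing strategies. -/
def resultIs (G : Game) (s : Player) : Result → Prop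
  | .Lwin => WinsAs G s .L
  | .Rwin => WinsAs G s .R
  | .draw => NonLosingAs G s .L ∧ NonLosingAs G s .R

/-- An outcome: the pair of results with optimal play
(when Left starts, when Right starts). -/
abbrev Outcome := Result × Result

/-- `G` has outcome `o`. -/
def hasOutcome (G : Game) (o : Outcome) : Prop :=
  resultIs G .L o.1 ∧ resultIs G .R o.2

/-- Numerical value of a result, from Left's point of view:
Right wins < draw < Left wins. -/
def Result.val : Result → ℕ
  | .Rwin => 0
  | .draw => 1
  | .Lwin => 2

/-- The partial order `≤_L` on outcomes, comparing both components simultaneously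
from Left's point of view. -/
def outLE (o o' : Outcome) : Prop := o.1.val ≤ o'.1.val ∧ o.2.val ≤ o'.2.val

def oL : Outcome := (.Lwin, .Lwin)
def oLminus : Outcome := (.Lwin, .draw)
def oN : Outcome := (.Lwin, .Rwin)
def oD : Outcome := (.draw, .draw)
def oRminus : Outcome := (.draw, .Rwin)
def oR : Outcome := (.Rwin, .Rwin)

/-- The updated game `G_u` after Left has picked `u`. -/
def subL (G : Game) (u : ℕ) : Game where
  V := G.V.erase u
  EL := G.EL.image fun e => e.erase u
  ER := G.ER.filter fun e => u ∉ e

/-- The updated game `G^u` after Right has picked `u`. -/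
def subR (G : Game) (u : ℕ) : Game where
  V := G.V.erase u
  EL := G.EL.filter fun e => u ∉ e
  ER := G.ER.image fun e => e.erase u

/-- The updated game `G_u^v` after Left has picked `u` and Right has picked `v`. -/
def updLR (G : Game) (u v : ℕ) : Game where
  V := (G.V.erase u).erase v
  EL := (G.EL.filter fun e => v ∉ e).image fun e => e.erase u
  ER := (G.ER.filter fun e => u ∉ e).image fun e => e.erase v

/-- The disjoint union of two games. -/
def gunion (G G' : Game) : Game where
  V := G.V ∪ G'.V
  EL := G.EL ∪ G'.EL
  ER := G.ER ∪ G'.ER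

/-!
Left plays the two components independently, answering each of Right's moves in the component
where it was made: in `G` with a winning (when Left starts) or non-losing (when Right starts)
strategy, in `G'` with a non-losing strategy for the second player. Each component carries a
shadow play in which Left follows its strategy. When Right's move leaves Left nothing to answer
in its component, Left takes any free vertex; such a vertex taken in advance is credited to
Left once the shadow strategy asks for it, and extra vertices never hurt Left. Hence Right never
completes a red edge, and when Left starts, the blue edge guaranteed in `G` is completed at the
latest when the board is full. Whether the union is `L` or `L⁻` is then settled by determinacy
of the game started by Right.
-/

lemma Player.other_other (p : Player) : p.other.other = p := by cases p <;> rfl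

lemma mover_succ (s : Player) (n : ℕ) : mover s (n + 1) = (mover s n).other := by
  unfold mover
  split_ifs <;> first | omega | simp [Player.other_other]

lemma mover_append_singleton_of_eq {t p : Player} {h : List ℕ} (hm : mover t h.length = p)
    (x : ℕ) : mover t (h ++ [x]).length = p.other := by
  rw [List.length_append, List.length_singleton, mover_succ, hm]

lemma picked_nil (s p : Player) : picked s p [] = ∅ := by simp [picked]

lemma picked_append_singleton (s p : Player) (h : List ℕ) (x : ℕ) :
    picked s p (h ++ [x]) =
      if mover s h.length = p then insert x (picked s p h) else picked s p h := by
  have hprefix : ∀ i ∈ (Finset.range h.length).filter (fun i => mover s i = p),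
      (h ++ [x]).getD i 0 = h.getD i 0 := fun i hi => by
    simp [List.getD, List.getElem?_append_left (Finset.mem_range.mp (Finset.mem_filter.mp hi).1)]
  unfold picked
  rw [List.length_append, List.length_singleton, Finset.range_add_one, Finset.filter_insert]
  split_ifs
  · rw [Finset.image_insert, Finset.image_congr hprefix]
    simp [List.getD]
  · exact Finset.image_congr hprefix

lemma mem_of_mem_picked {s p : Player} {h : List ℕ} {a : ℕ} (ha : a ∈ picked s p h) : a ∈ h := by
  obtain ⟨i, hi, rfl⟩ := Finset.mem_image.mp ha
  have hlt : i < h.length := Finset.mem_range.mp (Finset.mem_filter.mp hi).1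
  rw [List.getD_eq_getElem h 0 hlt]
  exact List.getElem_mem hlt

lemma picked_union_picked (s : Player) (h : List ℕ) :
    picked s .L h ∪ picked s .R h = h.toFinset := by
  refine Finset.Subset.antisymm (Finset.union_subset ?_ ?_) fun a ha => ?_
  · exact fun a ha => List.mem_toFinset.mpr (mem_of_mem_picked ha)
  · exact fun a ha => List.mem_toFinset.mpr (mem_of_mem_picked ha)
  obtain ⟨i, hi, rfl⟩ := List.getElem_of_mem (List.mem_toFinset.mp ha)
  have hmem : h[i] ∈ picked s (mover s i) h :=
    Finset.mem_image.mpr ⟨i, Finset.mem_filter.mpr ⟨Finset.mem_range.mpr hi, rfl⟩,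
      List.getD_eq_getElem h 0 hi⟩
  cases hm : mover s i
  · exact Finset.mem_union_left _ (hm ▸ hmem)
  · exact Finset.mem_union_right _ (hm ▸ hmem)

lemma fills_mono {E : Finset (Finset ℕ)} {S T : Finset ℕ} (hST : S ⊆ T) :
    fills E S → fills E T := fun ⟨e, he, hes⟩ => ⟨e, he, hes.trans hST⟩

lemma fills_union {E₁ E₂ : Finset (Finset ℕ)} {S : Finset ℕ} :
    fills (E₁ ∪ E₂) S ↔ fills E₁ S ∨ fills E₂ S := by
  simp only [fills, Finset.mem_union, or_and_right, exists_or]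

lemma validHist_append_singleton {H : Game} {s : Player} {h : List ℕ} {x : ℕ} :
    ValidHist H s (h ++ [x]) ↔ ValidHist H s h ∧ x ∉ h ∧ x ∈ H.V ∧ ¬ ended H s h := by
  have htake : ∀ k ≤ h.length, (h ++ [x]).take k = h.take k :=
    fun k hk => List.take_append_of_le_length hk
  simp only [ValidHist, List.nodup_append, List.nodup_singleton, List.mem_singleton,
    List.mem_append, List.length_append, List.length_singleton]
  constructor
  · rintro ⟨⟨hnd, -, hx⟩, hV, hne⟩
    refine ⟨⟨hnd, fun y hy => hV y (Or.inl hy), fun k hk => ?_⟩, fun hxh => hx x hxh x rfl rfl,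
      hV x (Or.inr rfl), ?_⟩
    · rw [← htake k hk.le]; exact hne k (by omega)
    · rw [← List.take_length (l := h), ← htake _ le_rfl]; exact hne _ (by omega)
  · rintro ⟨⟨hnd, hV, hne⟩, hxh, hxV, hend⟩
    refine ⟨⟨hnd, trivial, fun a ha b hb hab => hxh (by rwa [hab, hb] at ha)⟩,
      fun y hy => hy.elim (hV y) (· ▸ hxV), fun k hk => ?_⟩
    rcases Nat.lt_or_ge k h.length with hlt | hge
    · rw [htake k hlt.le]; exact hne k hlt
    · rw [show k = h.length by omega, htake _ le_rfl, List.take_length]; exact hend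

lemma follows_append_singleton {s p : Player} {σ : Strategy} {h : List ℕ} {x : ℕ} :
    Follows s p σ (h ++ [x]) ↔ Follows s p σ h ∧ (mover s h.length = p → x = σ h) := by
  have hlast : (h ++ [x]).getD h.length 0 = x := by simp [List.getD]
  have htake : (h ++ [x]).take h.length = h := by simp
  have hprefix : ∀ k < h.length, (h ++ [x]).take k = h.take k ∧ (h ++ [x]).getD k 0 = h.getD k 0 :=
    fun k hk => ⟨List.take_append_of_le_length hk.le, List.getD_append _ _ _ _ hk⟩
  simp only [Follows, List.length_append, List.length_singleton]
  constructor
  · intro hf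
    refine ⟨fun k hk hm => ?_, fun hm => ?_⟩
    · have := hf k (by omega) hm; rwa [(hprefix k hk).1, (hprefix k hk).2] at this
    · have := hf _ (by omega) hm; rwa [hlast, htake] at this
  · rintro ⟨hf, hx⟩ k hk hm
    rcases Nat.lt_or_ge k h.length with hlt | hge
    · rw [(hprefix k hlt).1, (hprefix k hlt).2]; exact hf k hlt hm
    · obtain rfl : k = h.length := by omega
      rw [hlast, htake]; exact hx hm

lemma ValidHist.length_le_card {H : Game} {s : Player} {h : List ℕ} (hv : ValidHist H s h) :
    h.length ≤ H.V.card := by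
  rw [← List.toFinset_card_of_nodup hv.1]
  exact Finset.card_le_card fun a ha => hv.2.1 a (List.mem_toFinset.mp ha)

lemma ValidHist.length_lt_card {H : Game} {s : Player} {h : List ℕ} (hv : ValidHist H s h)
    (hc : ¬ Complete H s h) : h.length < H.V.card :=
  lt_of_le_of_ne hv.length_le_card fun hfull => hc (Or.inr hfull)

lemma toFinset_eq_of_length_eq_card {W : Finset ℕ} {g : List ℕ} (hnd : g.Nodup)
    (hsub : g.toFinset ⊆ W) (hlen : g.length = W.card) : g.toFinset = W :=
  Finset.eq_of_subset_of_card_le hsub (by rw [List.toFinset_card_of_nodup hnd, hlen])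

lemma exists_mem_not_mem_of_length_lt {W : Finset ℕ} {h : List ℕ} (hnd : h.Nodup)
    (hlen : h.length < W.card) : ∃ x ∈ W, x ∉ h := by
  by_contra! hall
  have : W.card ≤ h.toFinset.card :=
    Finset.card_le_card fun x hx => List.mem_toFinset.mpr (hall x hx)
  rw [List.toFinset_card_of_nodup hnd] at this
  omega

open Classical in
noncomputable def moveWith (W : Finset ℕ) (h : List ℕ) (P : ℕ → Prop) : ℕ :=
  if hx : ∃ x, (x ∈ W ∧ x ∉ h) ∧ P x then hx.choose
  else if hy : ∃ x ∈ W, x ∉ h then hy.choose else 0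

lemma moveWith_spec {W : Finset ℕ} {h : List ℕ} {P : ℕ → Prop} (hx : ∃ x, (x ∈ W ∧ x ∉ h) ∧ P x) :
    (moveWith W h P ∈ W ∧ moveWith W h P ∉ h) ∧ P (moveWith W h P) := by
  rw [moveWith, dif_pos hx]
  exact hx.choose_spec

lemma moveWith_mem {W : Finset ℕ} {h : List ℕ} {P : ℕ → Prop} (hnd : h.Nodup)
    (hlen : h.length < W.card) : moveWith W h P ∈ W ∧ moveWith W h P ∉ h := by
  by_cases hx : ∃ x, (x ∈ W ∧ x ∉ h) ∧ P x
  · exact (moveWith_spec hx).1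
  · have hy := exists_mem_not_mem_of_length_lt hnd hlen
    rw [moveWith, dif_neg hx, dif_pos hy]
    exact hy.choose_spec

lemma invariant_of_follows {H : Game} {s p : Player} {σ : Strategy} {P : List ℕ → Prop}
    (hnil : P [])
    (hstep : ∀ h x, ValidHist H s h → P h → ¬ Complete H s h → x ∈ H.V → x ∉ h →
      (mover s h.length = p → x = σ h) → P (h ++ [x])) :
    ∀ h, ValidHist H s h → Follows s p σ h → P h := by
  intro h
  induction h using List.reverseRecOn with
  | nil => exact fun _ _ => hnil
  | append_singleton h x ih =>
    intro hv hf
    obtain ⟨hvh, hxh, hxV, hne⟩ := validHist_append_singleton.mp hv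
    obtain ⟨hfh, hx⟩ := follows_append_singleton.mp hf
    have hlen := hv.length_le_card
    rw [List.length_append, List.length_singleton] at hlen
    refine hstep h x hvh (ih hvh hfh) ?_ hxV hxh hx
    rintro (hend | hfull)
    · exact hne hend
    · omega

open Classical in
/-- `LeftForces H s n h`: within `n` more moves from position `h`, Left can force the play to
be complete with a blue edge filled. -/
def LeftForces (H : Game) (s : Player) : ℕ → List ℕ → Prop
  | 0, h => fills H.EL (picked s .L h)
  | n + 1, h =>
    if Complete H s h then fills H.EL (picked s .L h)
    else if mover s h.length = .L then ∃ x, (x ∈ H.V ∧ x ∉ h) ∧ LeftForces H s n (h ++ [x])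
    else ∀ x, (x ∈ H.V ∧ x ∉ h) → LeftForces H s n (h ++ [x])

section Zermelo

variable {H : Game} {s : Player} {n : ℕ} {h : List ℕ}

lemma leftForces_of_complete (hc : Complete H s h) :
    LeftForces H s n h ↔ fills H.EL (picked s .L h) := by
  cases n <;> simp only [LeftForces, if_pos hc]

lemma leftForces_succ_of_left (hc : ¬ Complete H s h) (hm : mover s h.length = .L) :
    LeftForces H s (n + 1) h ↔ ∃ x, (x ∈ H.V ∧ x ∉ h) ∧ LeftForces H s n (h ++ [x]) := by
  rw [LeftForces, if_neg hc, if_pos hm]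

lemma leftForces_succ_of_right (hc : ¬ Complete H s h) (hm : mover s h.length ≠ .L) :
    LeftForces H s (n + 1) h ↔ ∀ x, (x ∈ H.V ∧ x ∉ h) → LeftForces H s n (h ++ [x]) := by
  rw [LeftForces, if_neg hc, if_neg hm]

lemma card_sub_length_eq_succ (hv : ValidHist H s h) (hc : ¬ Complete H s h) :
    H.V.card - h.length = H.V.card - (h.length + 1) + 1 := by
  have := hv.length_lt_card hc
  omega

variable (H s) in
noncomputable def forcingStrategy : Strategy := fun h =>
  moveWith H.V h fun x => LeftForces H s (H.V.card - (h.length + 1)) (h ++ [x])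

variable (H s) in
noncomputable def spoilingStrategy : Strategy := fun h =>
  moveWith H.V h fun x => ¬ LeftForces H s (H.V.card - (h.length + 1)) (h ++ [x])

lemma leftForces_of_follows_forcingStrategy (hw : LeftForces H s H.V.card []) :
    ∀ h, ValidHist H s h → Follows s .L (forcingStrategy H s) h →
      LeftForces H s (H.V.card - h.length) h := by
  refine invariant_of_follows (by simpa using hw) fun h x hv hw hc hxV hxh hx => ?_
  rw [card_sub_length_eq_succ hv hc] at hw
  rw [List.length_append, List.length_singleton]
  by_cases hm : mover s h.length = .L
  · rw [hx hm]
    exact (moveWith_spec ((leftForces_succ_of_left hc hm).mp hw)).2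
  · exact (leftForces_succ_of_right hc hm).mp hw x ⟨hxV, hxh⟩

lemma not_leftForces_of_follows_spoilingStrategy (hw : ¬ LeftForces H s H.V.card []) :
    ∀ h, ValidHist H s h → Follows s .R (spoilingStrategy H s) h →
      ¬ LeftForces H s (H.V.card - h.length) h := by
  refine invariant_of_follows (by simpa using hw) fun h x hv hw hc hxV hxh hx => ?_
  rw [card_sub_length_eq_succ hv hc] at hw
  rw [List.length_append, List.length_singleton]
  by_cases hm : mover s h.length = .L
  · exact fun hx' => hw ((leftForces_succ_of_left hc hm).mpr ⟨x, ⟨hxV, hxh⟩, hx'⟩)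
  · have hR : mover s h.length = .R := by cases hmm : mover s h.length <;> simp_all
    have hspoil : ∃ y, (y ∈ H.V ∧ y ∉ h) ∧
        ¬ LeftForces H s (H.V.card - (h.length + 1)) (h ++ [y]) := by
      by_contra! hall
      exact hw ((leftForces_succ_of_right hc hm).mpr hall)
    rw [hx hR]
    exact (moveWith_spec hspoil).2

theorem winsAs_left_or_nonLosingAs_right (H : Game) (s : Player) :
    WinsAs H s .L ∨ NonLosingAs H s .R := by
  by_cases hw : LeftForces H s H.V.card []
  · refine Or.inl ⟨forcingStrategy H s, fun h hv _ _ hlen _ => moveWith_mem hv.1 hlen,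
      fun h hv hf hc => ?_⟩
    exact (leftForces_of_complete hc).mp (leftForces_of_follows_forcingStrategy hw h hv hf)
  · refine Or.inr ⟨spoilingStrategy H s, fun h hv _ _ hlen _ => moveWith_mem hv.1 hlen,
      fun h hv hf hc => ?_⟩
    exact (leftForces_of_complete hc).not.mp
      (not_leftForces_of_follows_spoilingStrategy hw h hv hf)

end Zermelo

def WinsWith (H : Game) (s p : Player) (σ : Strategy) : Prop :=
  ∀ h, ValidHist H s h → Follows s p σ h → Complete H s h → fills (H.edges p) (picked s p h)

def NonLosingWith (H : Game) (s p : Player) (σ : Strategy) : Prop :=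
  ∀ h, ValidHist H s h → Follows s p σ h → Complete H s h →
    ¬ fills (H.edges p.other) (picked s p.other h)

section SingleGame

variable {H : Game} {s p : Player} {σ : Strategy}

lemma NonLosingWith.not_fills_red (hσ : NonLosingWith H s .L σ) {g : List ℕ}
    (hv : ValidHist H s g) (hf : Follows s .L σ g) : ¬ fills H.ER (picked s .R g) :=
  fun hfill => hσ g hv hf (Or.inl (Or.inr hfill)) hfill

/-- Right cannot fill a red edge at the same moment as Left fills a blue one: whoever moved
last would have filled theirs one move earlier, when the play had not ended yet. -/
lemma WinsWith.nonLosingWith (hR : ∀ e ∈ H.ER, e.Nonempty) (hσ : WinsWith H s .L σ) :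
    NonLosingWith H s .L σ := by
  intro h hv hf hc hfillR
  have hfillL : fills H.EL (picked s .L h) := hσ h hv hf hc
  rcases List.eq_nil_or_concat h with rfl | ⟨g, z, rfl⟩
  · obtain ⟨e, he, hes⟩ := hfillR
    obtain ⟨a, ha⟩ := hR e he
    simpa [picked_nil] using hes ha
  · rw [List.concat_eq_append] at hv hfillL hfillR
    have hne := (validHist_append_singleton.mp hv).2.2.2
    rw [picked_append_singleton] at hfillL hfillR
    cases hm : mover s g.length
    · rw [if_neg (by rw [hm]; decide)] at hfillR
      exact hne (Or.inr hfillR)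
    · rw [if_neg (by rw [hm]; decide)] at hfillL
      exact hne (Or.inl hfillL)

lemma exists_complete_extension (hleg : Legal H s p σ) {g : List ℕ} (hv : ValidHist H s g)
    (hf : Follows s p σ g) :
    ∃ r, ValidHist H s (g ++ r) ∧ Follows s p σ (g ++ r) ∧ Complete H s (g ++ r) := by
  induction hn : H.V.card - g.length generalizing g with
  | zero =>
    have := hv.length_le_card
    exact ⟨[], by simpa using hv, by simpa using hf, Or.inr (by rw [List.append_nil]; omega)⟩
  | succ n ih =>
    by_cases hc : Complete H s g
    · exact ⟨[], by simpa using hv, by simpa using hf, by simpa using hc⟩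
    have hne : ¬ ended H s g := fun he => hc (Or.inl he)
    have hlen := hv.length_lt_card hc
    obtain ⟨y, ⟨hyV, hyg⟩, hy⟩ : ∃ y, (y ∈ H.V ∧ y ∉ g) ∧ (mover s g.length = p → y = σ g) := by
      by_cases hm : mover s g.length = p
      · exact ⟨σ g, hleg g hv hf hne hlen hm, fun _ => rfl⟩
      · obtain ⟨y, hyV, hyg⟩ := exists_mem_not_mem_of_length_lt hv.1 hlen
        exact ⟨y, ⟨hyV, hyg⟩, fun hm' => absurd hm' hm⟩
    obtain ⟨r, hr⟩ := ih (validHist_append_singleton.mpr ⟨hv, hyg, hyV, hne⟩)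
      (follows_append_singleton.mpr ⟨hf, hy⟩)
      (by rw [List.length_append, List.length_singleton]; omega)
    exact ⟨y :: r, by simpa using hr⟩

lemma picked_append_subset (s p : Player) (g r : List ℕ) :
    picked s p (g ++ r) ⊆ picked s p g ∪ r.toFinset := by
  intro a ha
  obtain ⟨i, hi, rfl⟩ := Finset.mem_image.mp ha
  obtain ⟨hi, hm⟩ := Finset.mem_filter.mp hi
  rw [Finset.mem_range, List.length_append] at hi
  rcases lt_or_ge i g.length with hig | hig
  · rw [List.getD_append _ _ _ _ hig]
    exact Finset.mem_union_left _ (Finset.mem_image.mpr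
      ⟨i, Finset.mem_filter.mpr ⟨Finset.mem_range.mpr hig, hm⟩, rfl⟩)
  · rw [List.getD_append_right _ _ _ _ hig, List.getD_eq_getElem _ _ (by omega)]
    exact Finset.mem_union_right _ (List.mem_toFinset.mpr (List.getElem_mem _))

/-- Completing the play can only add free vertices to Left's set. -/
lemma WinsWith.fills_picked_union_free (hleg : Legal H s .L σ) (hσ : WinsWith H s .L σ)
    {g : List ℕ} (hv : ValidHist H s g) (hf : Follows s .L σ g) :
    fills H.EL (picked s .L g ∪ (H.V \ g.toFinset)) := by
  obtain ⟨r, hvr, hfr, hcr⟩ := exists_complete_extension hleg hv hf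
  refine fills_mono ((picked_append_subset s .L g r).trans (Finset.union_subset_union_right ?_))
    (hσ _ hvr hfr hcr)
  intro a ha
  have har := List.mem_toFinset.mp ha
  refine Finset.mem_sdiff.mpr ⟨hvr.2.1 a (List.mem_append_right _ har), fun hag => ?_⟩
  exact List.disjoint_of_nodup_append hvr.1 (List.mem_toFinset.mp hag) har

end SingleGame

def LeftPending (H : Game) (t : Player) (g : List ℕ) : Prop :=
  mover t g.length = .L ∧ g.length < H.V.card

instance (H : Game) (t : Player) (g : List ℕ) : Decidable (LeftPending H t g) :=
  inferInstanceAs (Decidable (_ ∧ _))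

lemma not_leftPending_append {H : Game} {t : Player} {g : List ℕ} (hm : mover t g.length = .L)
    (y : ℕ) : ¬ LeftPending H t (g ++ [y]) := fun hp =>
  absurd ((mover_append_singleton_of_eq hm y).symm.trans hp.1) (by decide)

/-- `g` is a play of `H` started by `t` in which Left follows `σ`, shadowing the real play `h`
started by `s`: Right's vertices in `g` are exactly Right's real vertices in `H`, while Left's
are among Left's real vertices (Left may have taken a vertex before `σ` asks for it). -/
structure Shadows (H : Game) (t : Player) (σ : Strategy) (s : Player) (h g : List ℕ) : Prop where
  valid : ValidHist H t g
  follows : Follows t .L σ g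
  picked_right : picked t .R g = picked s .R h ∩ H.V
  picked_left : picked t .L g ⊆ picked s .L h

namespace Shadows

variable {H : Game} {t s : Player} {σ : Strategy} {h g : List ℕ} {x : ℕ}

lemma nil : Shadows H t σ s [] [] :=
  ⟨⟨List.nodup_nil, by simp, by simp⟩, fun k hk => by simp at hk, by simp [picked_nil],
    by simp [picked_nil]⟩

lemma toFinset_subset (sh : Shadows H t σ s h g) : g.toFinset ⊆ h.toFinset := by
  rw [← picked_union_picked t g, ← picked_union_picked s h, sh.picked_right]
  exact Finset.union_subset_union sh.picked_left Finset.inter_subset_left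

lemma not_ended {U : Game} (sh : Shadows H t σ s h g) (hL : H.EL ⊆ U.EL) (hR : H.ER ⊆ U.ER)
    (hne : ¬ ended U s h) : ¬ ended H t g := by
  rintro (⟨e, he, hes⟩ | ⟨e, he, hes⟩)
  · exact hne (Or.inl ⟨e, hL he, hes.trans sh.picked_left⟩)
  · exact hne (Or.inr ⟨e, hR he, hes.trans (sh.picked_right ▸ Finset.inter_subset_left)⟩)

lemma fills_red (sh : Shadows H t σ s h g) (hER : ∀ e ∈ H.ER, e ⊆ H.V)
    (hfill : fills H.ER (picked s .R h)) : fills H.ER (picked t .R g) := by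
  obtain ⟨e, he, hes⟩ := hfill
  exact ⟨e, he, sh.picked_right ▸ Finset.subset_inter hes (hER e he)⟩

lemma mem_picked_left (sh : Shadows H t σ s h g) {v : ℕ} (hv : v ∈ H.V) (hvg : v ∉ g)
    (hvh : v ∈ h) : v ∈ picked s .L h := by
  have hLR : v ∈ picked s .L h ∪ picked s .R h := by
    rw [picked_union_picked]; exact List.mem_toFinset.mpr hvh
  refine (Finset.mem_union.mp hLR).resolve_right fun hR =>
    hvg (mem_of_mem_picked (s := t) (p := .R) ?_)
  exact sh.picked_right ▸ Finset.mem_inter.mpr ⟨hR, hv⟩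

lemma picked_left_union_free_subset (sh : Shadows H t σ s h g) (hV : H.V ⊆ h.toFinset) :
    picked t .L g ∪ (H.V \ g.toFinset) ⊆ picked s .L h := by
  refine Finset.union_subset sh.picked_left fun v hv => ?_
  obtain ⟨hvV, hvg⟩ := Finset.mem_sdiff.mp hv
  exact sh.mem_picked_left hvV (fun h' => hvg (List.mem_toFinset.mpr h'))
    (List.mem_toFinset.mp (hV hvV))

/-- A vertex of `H` still free in the real play is free in `g`, so `g` is not finished. -/
lemma mover_eq_right (sh : Shadows H t σ s h g) (hnp : ¬ LeftPending H t g) (hx : x ∈ H.V)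
    (hxh : x ∉ h) : mover t g.length = .R := by
  cases hm : mover t g.length
  · exfalso
    have hlen : g.length = H.V.card :=
      le_antisymm sh.valid.length_le_card (not_lt.mp fun hlt => hnp ⟨hm, hlt⟩)
    have hfull := toFinset_eq_of_length_eq_card sh.valid.1
      (fun a ha => sh.valid.2.1 a (List.mem_toFinset.mp ha)) hlen
    exact hxh (List.mem_toFinset.mp (sh.toFinset_subset (hfull ▸ hx)))
  · rfl

lemma append_left (sh : Shadows H t σ s h g) (hm : mover s h.length = .L) (x : ℕ) :
    Shadows H t σ s (h ++ [x]) g where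
  valid := sh.valid
  follows := sh.follows
  picked_right := by rw [picked_append_singleton, if_neg (by rw [hm]; decide), sh.picked_right]
  picked_left := by
    rw [picked_append_singleton, if_pos hm]
    exact sh.picked_left.trans (Finset.subset_insert _ _)

/-- Left's real move answers the pending move `σ g` of the shadow play, by that very vertex
if it is free and by any free vertex otherwise (then `σ g` is already Left's). -/
lemma append_left_pending {W : Finset ℕ} (sh : Shadows H t σ s h g) (hleg : Legal H t .L σ)
    (hm : mover s h.length = .L) (hp : LeftPending H t g) (hne : ¬ ended H t g)
    (hVW : H.V ⊆ W) : Shadows H t σ s (h ++ [moveWith W h (· = σ g)]) (g ++ [σ g]) := by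
  obtain ⟨hσV, hσg⟩ := hleg g sh.valid sh.follows hne hp.2 hp.1
  have hmem : σ g ∈ insert (moveWith W h (· = σ g)) (picked s .L h) := by
    by_cases hσh : σ g ∈ h
    · exact Finset.mem_insert_of_mem (sh.mem_picked_left hσV hσg hσh)
    · rw [(moveWith_spec (P := (· = σ g)) ⟨σ g, ⟨hVW hσV, hσh⟩, rfl⟩).2]
      exact Finset.mem_insert_self _ _
  refine ⟨validHist_append_singleton.mpr ⟨sh.valid, hσg, hσV, hne⟩,
    follows_append_singleton.mpr ⟨sh.follows, fun _ => rfl⟩, ?_, ?_⟩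
  · rw [picked_append_singleton, if_neg (by rw [hp.1]; decide), picked_append_singleton,
      if_neg (by rw [hm]; decide), sh.picked_right]
  · rw [picked_append_singleton, if_pos hp.1, picked_append_singleton, if_pos hm]
    exact Finset.insert_subset hmem (sh.picked_left.trans (Finset.subset_insert _ _))

lemma append_right (sh : Shadows H t σ s h g) (hm : mover s h.length = .R)
    (hnp : ¬ LeftPending H t g) (hxh : x ∉ h) (hne : ¬ ended H t g) :
    Shadows H t σ s (h ++ [x]) (if x ∈ H.V then g ++ [x] else g) := by
  split_ifs with hx
  · have hmt := sh.mover_eq_right hnp hx hxh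
    have hxg : x ∉ g := fun hxg =>
      hxh (List.mem_toFinset.mp (sh.toFinset_subset (List.mem_toFinset.mpr hxg)))
    refine ⟨validHist_append_singleton.mpr ⟨sh.valid, hxg, hx, hne⟩,
      follows_append_singleton.mpr ⟨sh.follows, fun h' => absurd (hmt.symm.trans h') (by decide)⟩,
      ?_, ?_⟩
    · rw [picked_append_singleton, if_pos hmt, picked_append_singleton, if_pos hm,
        Finset.insert_inter_of_mem hx, sh.picked_right]
    · rw [picked_append_singleton, if_neg (by rw [hmt]; decide), picked_append_singleton,
        if_neg (by rw [hm]; decide)]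
      exact sh.picked_left
  · refine ⟨sh.valid, sh.follows, ?_, ?_⟩
    · rw [picked_append_singleton, if_pos hm, Finset.insert_inter_of_notMem hx, sh.picked_right]
    · rw [picked_append_singleton, if_neg (by rw [hm]; decide)]
      exact sh.picked_left

end Shadows

section Union

variable (G G' : Game) (σ σ' : Strategy) (s : Player)

/-- How the `i`-th real move `x` updates the shadow plays of `G` (started by `s`) and of `G'`
(started by Right). -/
def shadowStep (i : ℕ) (gg : List ℕ × List ℕ) (x : ℕ) : List ℕ × List ℕ :=
  if mover s i = .R then
    (if x ∈ G.V then gg.1 ++ [x] else gg.1, if x ∈ G'.V then gg.2 ++ [x] else gg.2)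
  else if LeftPending G' .R gg.2 then (gg.1, gg.2 ++ [σ' gg.2])
  else if LeftPending G s gg.1 then (gg.1 ++ [σ gg.1], gg.2)
  else gg

def shadowState (h : List ℕ) : ℕ × (List ℕ × List ℕ) :=
  h.foldl (fun st x => (st.1 + 1, shadowStep G G' σ σ' s st.1 st.2 x)) (0, [], [])

def shadowPlays (h : List ℕ) : List ℕ × List ℕ := (shadowState G G' σ σ' s h).2

def unionTarget (gg : List ℕ × List ℕ) : ℕ :=
  if LeftPending G' .R gg.2 then σ' gg.2 else σ gg.1

noncomputable def unionStrategy : Strategy := fun h =>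
  moveWith (G.V ∪ G'.V) h (· = unionTarget G' σ σ' (shadowPlays G G' σ σ' s h))

structure UnionInv (h : List ℕ) (gg : List ℕ × List ℕ) : Prop where
  fst : Shadows G s σ s h gg.1
  snd : Shadows G' .R σ' s h gg.2
  right_turn : mover s h.length = .R → ¬ LeftPending G s gg.1 ∧ ¬ LeftPending G' .R gg.2
  left_turn : mover s h.length = .L → ¬ (LeftPending G s gg.1 ∧ LeftPending G' .R gg.2)

variable {G G' σ σ' s}

lemma shadowPlays_append_singleton (h : List ℕ) (x : ℕ) :
    shadowPlays G G' σ σ' s (h ++ [x]) =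
      shadowStep G G' σ σ' s h.length (shadowPlays G G' σ σ' s h) x := by
  have hfst : ∀ h, (shadowState G G' σ σ' s h).1 = h.length := by
    intro h
    induction h using List.reverseRecOn with
    | nil => rfl
    | append_singleton h x ih =>
      simp only [shadowState, List.foldl_append, List.foldl_cons, List.foldl_nil,
        List.length_append, List.length_singleton] at ih ⊢
      rw [ih]
  simp only [shadowPlays, shadowState, List.foldl_append, List.foldl_cons, List.foldl_nil]
  rw [← shadowState, hfst]

namespace UnionInv

lemma nil : UnionInv G G' σ σ' s [] ([], []) where
  fst := Shadows.nil
  snd := Shadows.nil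
  right_turn hm :=
    ⟨fun hp => absurd (hm.symm.trans hp.1) (by decide), fun hp => absurd hp.1 (by decide)⟩
  left_turn _ hp := absurd hp.2.1 (by decide)

lemma append_right (hdisj : Disjoint G.V G'.V) {h : List ℕ} {gg : List ℕ × List ℕ} {x : ℕ}
    (inv : UnionInv G G' σ σ' s h gg) (hm : mover s h.length = .R) (hxh : x ∉ h)
    (hne : ¬ ended (gunion G G') s h) :
    UnionInv G G' σ σ' s (h ++ [x]) (shadowStep G G' σ σ' s h.length gg x) := by
  obtain ⟨hnp, hnp'⟩ := inv.right_turn hm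
  have hne₁ := inv.fst.not_ended Finset.subset_union_left Finset.subset_union_left hne
  have hne₂ := inv.snd.not_ended Finset.subset_union_right Finset.subset_union_right hne
  rw [shadowStep, if_pos hm]
  refine ⟨inv.fst.append_right hm hnp hxh hne₁, inv.snd.append_right hm hnp' hxh hne₂,
    fun h' => absurd ((mover_append_singleton_of_eq hm x).symm.trans h') (by decide),
    fun _ ⟨hp, hp'⟩ => ?_⟩
  by_cases hxG : x ∈ G.V
  · rw [if_neg (Finset.disjoint_left.mp hdisj hxG)] at hp'
    exact hnp' hp'
  · rw [if_neg hxG] at hp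
    exact hnp hp

lemma append_left (hleg : Legal G s .L σ) (hleg' : Legal G' .R .L σ') {h : List ℕ}
    {gg : List ℕ × List ℕ} {x : ℕ} (inv : UnionInv G G' σ σ' s h gg)
    (hm : mover s h.length = .L) (hne : ¬ ended (gunion G G') s h)
    (hx : x = moveWith (G.V ∪ G'.V) h (· = unionTarget G' σ σ' gg)) :
    UnionInv G G' σ σ' s (h ++ [x]) (shadowStep G G' σ σ' s h.length gg x) := by
  have hne₁ := inv.fst.not_ended Finset.subset_union_left Finset.subset_union_left hne
  have hne₂ := inv.snd.not_ended Finset.subset_union_right Finset.subset_union_right hne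
  have hnext : ∀ y, ¬ mover s (h ++ [y]).length = .L := fun y => by
    rw [mover_append_singleton_of_eq hm]; decide
  subst hx
  rw [shadowStep, if_neg (by rw [hm]; decide)]
  by_cases hp' : LeftPending G' .R gg.2
  · have hnp : ¬ LeftPending G s gg.1 := fun hp => inv.left_turn hm ⟨hp, hp'⟩
    rw [if_pos hp', unionTarget, if_pos hp']
    exact ⟨inv.fst.append_left hm _,
      inv.snd.append_left_pending hleg' hm hp' hne₂ Finset.subset_union_right,
      fun _ => ⟨hnp, not_leftPending_append hp'.1 _⟩, fun h' => absurd h' (hnext _)⟩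
  · rw [if_neg hp']
    by_cases hp : LeftPending G s gg.1
    · rw [if_pos hp, unionTarget, if_neg hp']
      exact ⟨inv.fst.append_left_pending hleg hm hp hne₁ Finset.subset_union_left,
        inv.snd.append_left hm _, fun _ => ⟨not_leftPending_append hp.1 _, hp'⟩,
        fun h' => absurd h' (hnext _)⟩
    · rw [if_neg hp]
      exact ⟨inv.fst.append_left hm _, inv.snd.append_left hm _, fun _ => ⟨hp, hp'⟩,
        fun h' => absurd h' (hnext _)⟩

lemma not_fills_red {h : List ℕ} {gg : List ℕ × List ℕ}
    (inv : UnionInv G G' σ σ' s h gg) (hG : ∀ e ∈ G.ER, e ⊆ G.V) (hG' : ∀ e ∈ G'.ER, e ⊆ G'.V)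
    (hσ : NonLosingWith G s .L σ) (hσ' : NonLosingWith G' .R .L σ') :
    ¬ fills (gunion G G').ER (picked s .R h) := by
  intro hfill
  rcases fills_union.mp hfill with hfill | hfill
  · exact hσ.not_fills_red inv.fst.valid inv.fst.follows (inv.fst.fills_red hG hfill)
  · exact hσ'.not_fills_red inv.snd.valid inv.snd.follows (inv.snd.fills_red hG' hfill)

end UnionInv

lemma unionInv_shadowPlays (hdisj : Disjoint G.V G'.V) (hleg : Legal G s .L σ)
    (hleg' : Legal G' .R .L σ') :
    ∀ h, ValidHist (gunion G G') s h → Follows s .L (unionStrategy G G' σ σ' s) h →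
      UnionInv G G' σ σ' s h (shadowPlays G G' σ σ' s h) := by
  refine invariant_of_follows UnionInv.nil fun h x _ inv hc _ hxh hx => ?_
  have hne : ¬ ended (gunion G G') s h := fun he => hc (Or.inl he)
  rw [shadowPlays_append_singleton]
  cases hm : mover s h.length
  · exact inv.append_left hleg hleg' hm hne (hx hm)
  · exact inv.append_right hdisj hm hxh hne

lemma unionStrategy_legal : Legal (gunion G G') s .L (unionStrategy G G' σ σ' s) :=
  fun _ hv _ _ hlen _ => moveWith_mem hv.1 hlen

lemma unionStrategy_nonLosingWith (hdisj : Disjoint G.V G'.V) (hG : WellFormed G)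
    (hG' : WellFormed G') (hleg : Legal G s .L σ) (hσ : NonLosingWith G s .L σ)
    (hleg' : Legal G' .R .L σ') (hσ' : NonLosingWith G' .R .L σ') :
    NonLosingWith (gunion G G') s .L (unionStrategy G G' σ σ' s) := fun h hv hf _ =>
  (unionInv_shadowPlays hdisj hleg hleg' h hv hf).not_fills_red
    (fun e he => (hG.2 e he).1) (fun e he => (hG'.2 e he).1) hσ hσ'

lemma unionStrategy_winsWith (hdisj : Disjoint G.V G'.V) (hG : WellFormed G)
    (hG' : WellFormed G') (hleg : Legal G s .L σ) (hσ : WinsWith G s .L σ)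
    (hleg' : Legal G' .R .L σ') (hσ' : NonLosingWith G' .R .L σ') :
    WinsWith (gunion G G') s .L (unionStrategy G G' σ σ' s) := by
  intro h hv hf hc
  have inv := unionInv_shadowPlays hdisj hleg hleg' h hv hf
  rcases hc with (hL | hR) | hfull
  · exact hL
  · exact absurd hR (inv.not_fills_red (fun e he => (hG.2 e he).1) (fun e he => (hG'.2 e he).1)
      (hσ.nonLosingWith fun e he => (hG.2 e he).2) hσ')
  · have hcover : h.toFinset = G.V ∪ G'.V := toFinset_eq_of_length_eq_card hv.1
      (fun a ha => hv.2.1 a (List.mem_toFinset.mp ha)) hfull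
    refine fills_union.mpr (Or.inl (fills_mono ?_
      (hσ.fills_picked_union_free hleg inv.fst.valid inv.fst.follows)))
    exact inv.fst.picked_left_union_free_subset (hcover ▸ Finset.subset_union_left)

end Union

/-- If `o(G) = o(G') = L⁻`, then `o(G ∪ G') ∈ {L, L⁻}`: Left has a winning strategy on
`G ∪ G'` as first player and a non-losing strategy on `G ∪ G'` as second player. -/
theorem union_Lminus_Lminus (G G' : Game) (hG : WellFormed G) (hG' : WellFormed G')
    (hdisj : Disjoint G.V G'.V)
    (hGo : hasOutcome G oLminus) (hG'o : hasOutcome G' oLminus) :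
    (∃ o : Outcome, hasOutcome (gunion G G') o ∧ (o = oL ∨ o = oLminus)) ∧
      WinsAs (gunion G G') .L .L ∧ NonLosingAs (gunion G G') .R .L := by
  obtain ⟨σ₁, hleg₁, hσ₁⟩ : WinsAs G .L .L := hGo.1
  obtain ⟨σ₂, hleg₂, hσ₂⟩ : NonLosingAs G .R .L := hGo.2.1
  obtain ⟨σ', hleg', hσ'⟩ : NonLosingAs G' .R .L := hG'o.2.1
  have hwin : WinsAs (gunion G G') .L .L :=
    ⟨_, unionStrategy_legal, unionStrategy_winsWith hdisj hG hG' hleg₁ hσ₁ hleg' hσ'⟩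
  have hsafe : NonLosingAs (gunion G G') .R .L :=
    ⟨_, unionStrategy_legal, unionStrategy_nonLosingWith hdisj hG hG' hleg₂ hσ₂ hleg' hσ'⟩
  refine ⟨?_, hwin, hsafe⟩
  rcases winsAs_left_or_nonLosingAs_right (gunion G G') .R with hRwin | hRsafe
  · exact ⟨oL, ⟨hwin, hRwin⟩, Or.inl rfl⟩
  · exact ⟨oLminus, ⟨hwin, hsafe, hRsafe⟩, Or.inr rfl⟩

end APG
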